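/- Let G be a group, I a set, (H_i)_{i∈I} subgroups of G and ρ_i : H_i → G group homomorphisms, and let M be the associated monoid HNN-extension ⟨G, t_i (i ∈ I) | relations of G, h t_i = t_i ρ_i(h) for all h ∈ H_i⟩. Then M is cancellative (and hence a Rees monoid) if and only if ρ_i is injective for every i ∈ I. -/

import Mathlib

universe u v

/-- The principal right ideal `aM` of a monoid. -/
def prIdeal {M : Type*} [Monoid M] (a : M) : Set M := Set.range fun m => a * m

/-- A left Rees monoid: a left cancellative, right rigid monoid in which every principal
right ideal is contained in only finitely many distinct principal right ideals. -/
def IsLeftReesMonoid (M : Type*) [Monoid M] : Prop :=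
  (∀ a b c : M, a * b = a * c → b = c) ∧
  (∀ a b : M, (prIdeal a ∩ prIdeal b).Nonempty →
    prIdeal a ⊆ prIdeal b ∨ prIdeal b ⊆ prIdeal a) ∧
  (∀ a : M, {S : Set M | (∃ b : M, S = prIdeal b) ∧ prIdeal a ⊆ S}.Finite)

/-- The defining relations of the monoid HNN-extension
`⟨G, tᵢ (i ∈ I) | relations of G, h tᵢ = tᵢ ρᵢ(h) for h ∈ Hᵢ⟩`. -/
inductive HNNRel (G : Type u) [Group G] {I : Type v} (H : I → Subgroup G)
    (ρ : ∀ i, H i →* G) : FreeMonoid (G ⊕ I) → FreeMonoid (G ⊕ I) → Prop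
  | mul (g h : G) : HNNRel G H ρ
      (FreeMonoid.of (Sum.inl g) * FreeMonoid.of (Sum.inl h))
      (FreeMonoid.of (Sum.inl (g * h)))
  | one : HNNRel G H ρ (FreeMonoid.of (Sum.inl (1 : G))) 1
  | hnn (i : I) (h : H i) : HNNRel G H ρ
      (FreeMonoid.of (Sum.inl (h : G)) * FreeMonoid.of (Sum.inr i))
      (FreeMonoid.of (Sum.inr i) * FreeMonoid.of (Sum.inl (ρ i h)))

/-- The monoid HNN-extension of `G` with associated subgroups `Hᵢ`, homomorphisms `ρᵢ`
and stable letters `tᵢ`. -/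
abbrev HNNMonoid (G : Type u) [Group G] {I : Type v} (H : I → Subgroup G)
    (ρ : ∀ i, H i →* G) :=
  (conGen (HNNRel G H ρ)).Quotient

/-!
Fix a transversal of each `G ⧸ Hᵢ`. Every element of the monoid HNN-extension `M` is uniquely
`g₁ tᵢ₁ ⋯ gₙ tᵢₙ k` with the `gⱼ` in the transversal and `k ∈ G`. Uniqueness comes from
van der Waerden's trick: `M` acts on these normal forms, an element `g ∈ G` being pushed through
each `tᵢ` as `g gⱼ = g' h` with `g'` in the transversal, `h ∈ Hᵢ`, and `h tᵢ = tᵢ ρᵢ(h)`.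
Every generator acts injectively, so `M` is left cancellative. In a product `b a` the letters of
`b` form a prefix of the normal form, and the `G`-part of `b` is recovered from the rest exactly
when `G` acts freely on normal forms, which is the injectivity of the `ρᵢ`. Finally `x ∈ a M`
iff the `t`-letters of `a` form a prefix of those of `x`, which gives right rigidity and the
finiteness condition.
-/

namespace QuotientGroup

variable {G : Type*} [Group G] (K : Subgroup G)

noncomputable def outFactor (g : G) : K :=
  ⟨(g : G ⧸ K).out⁻¹ * g, QuotientGroup.eq.mp (out_eq' _)⟩

variable {K}

theorem out_mul_outFactor (g : G) : (g : G ⧸ K).out * outFactor K g = g := by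
  simp [outFactor]

theorem mk_mul_out (g a : G) : ((g * (a : G ⧸ K).out : G) : G ⧸ K) = ↑(g * a) := by
  conv_rhs => rw [← out_mul_outFactor (K := K) a, ← mul_assoc]
  exact (mk_mul_of_mem _ (outFactor K a).2).symm

theorem outFactor_mul_out_mul (g a : G) :
    outFactor K (g * (a : G ⧸ K).out) * outFactor K a = outFactor K (g * a) := by
  ext
  simp only [outFactor, Subgroup.coe_mul, mk_mul_out]
  group

theorem outFactor_out (q : G ⧸ K) : outFactor K q.out = 1 := by
  ext; simp [outFactor]

theorem outFactor_of_mem (h : K) : outFactor K h = outFactor K 1 * h := by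
  have hh : ((h : G) : G ⧸ K) = ((1 : G) : G ⧸ K) := by
    rw [QuotientGroup.eq, mul_one]; exact inv_mem h.2
  ext; simp only [outFactor, hh, Subgroup.coe_mul, mul_one]

end QuotientGroup

theorem prIdeal_mul_of_isUnit {M : Type*} [Monoid M] (a : M) {u : M} (hu : IsUnit u) :
    prIdeal (a * u) = prIdeal a := by
  obtain ⟨u, rfl⟩ := hu
  ext x
  constructor
  · rintro ⟨m, rfl⟩
    exact ⟨u * m, (mul_assoc _ _ _).symm⟩
  · rintro ⟨m, rfl⟩
    exact ⟨↑u⁻¹ * m, by simp only [mul_assoc, Units.mul_inv_cancel_left]⟩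

namespace HNNMonoid

open QuotientGroup

variable {G : Type u} [Group G] {I : Type v} {H : I → Subgroup G}

variable (H) in
/-- `(⟨i₁, q₁⟩ :: ⋯ :: ⟨iₙ, qₙ⟩ :: [], k)` encodes the element `q₁.out tᵢ₁ ⋯ qₙ.out tᵢₙ k`. -/
abbrev NormalForm := List (Σ i, G ⧸ H i) × G

namespace NormalForm

def cons (i : I) (q : G ⧸ H i) (x : NormalForm H) : NormalForm H := (⟨i, q⟩ :: x.1, x.2)

theorem cons_inj {i : I} {q q' : G ⧸ H i} {x x' : NormalForm H} :
    cons i q x = cons i q' x' ↔ q = q' ∧ x = x' := by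
  simp [cons, Prod.ext_iff, and_assoc]

variable (ρ : ∀ i, H i →* G)

noncomputable def ofMul : G → NormalForm H → NormalForm H
  | g, ([], k) => ([], g * k)
  | g, (⟨i, q⟩ :: L, k) => cons i ↑(g * q.out) (ofMul (ρ i (outFactor (H i) (g * q.out))) (L, k))

noncomputable def ofTMul (i : I) (g : G) (x : NormalForm H) : NormalForm H :=
  cons i ↑g (ofMul ρ (ρ i (outFactor (H i) g)) x)

theorem ofMul_nil (g k : G) : ofMul ρ g ([], k) = ([], g * k) := by
  rw [ofMul]

theorem ofMul_cons (g : G) (i : I) (q : G ⧸ H i) (x : NormalForm H) :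
    ofMul ρ g (cons i q x) = ofTMul ρ i (g * q.out) x := by
  rw [cons, ofMul, ofTMul]

theorem ofMul_mul (g g' : G) (x : NormalForm H) :
    ofMul ρ (g * g') x = ofMul ρ g (ofMul ρ g' x) := by
  obtain ⟨L, k⟩ := x
  induction L generalizing g g' with
  | nil => simp [ofMul_nil, mul_assoc]
  | cons e L ih =>
    obtain ⟨i, q⟩ := e
    change ofMul ρ _ (cons i q (L, k)) = ofMul ρ g (ofMul ρ g' (cons i q (L, k)))
    simp only [ofMul_cons, ofTMul, ← ih, ← map_mul, outFactor_mul_out_mul, mk_mul_out, mul_assoc]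

theorem ofMul_one (x : NormalForm H) : ofMul ρ 1 x = x := by
  obtain ⟨L, k⟩ := x
  induction L with
  | nil => simp [ofMul_nil]
  | cons e L ih =>
    obtain ⟨i, q⟩ := e
    change ofMul ρ 1 (cons i q (L, k)) = cons i q (L, k)
    simp [ofMul_cons, ofTMul, outFactor_out, ih]

theorem ofMul_ofTMul (g a : G) (i : I) (x : NormalForm H) :
    ofMul ρ g (ofTMul ρ i a x) = ofTMul ρ i (g * a) x := by
  simp only [ofTMul, ofMul_cons, ← ofMul_mul, ← map_mul, outFactor_mul_out_mul, mk_mul_out]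

theorem ofTMul_out (i : I) (q : G ⧸ H i) (x : NormalForm H) :
    ofTMul ρ i q.out x = cons i q x := by
  simp [ofTMul, outFactor_out, ofMul_one]

theorem ofMul_ofTMul_one (i : I) (h : H i) (x : NormalForm H) :
    ofMul ρ h (ofTMul ρ i 1 x) = ofTMul ρ i 1 (ofMul ρ (ρ i h) x) := by
  have hh : ((h : G) : G ⧸ H i) = ((1 : G) : G ⧸ H i) := by
    rw [QuotientGroup.eq, mul_one]; exact inv_mem h.2
  rw [ofMul_ofTMul, mul_one, ofTMul, ofTMul, ← ofMul_mul, ← map_mul, hh, outFactor_of_mem]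

theorem ofMul_injective (g : G) : Function.Injective (ofMul ρ g) :=
  Function.LeftInverse.injective (g := ofMul ρ g⁻¹) fun x => by
    rw [← ofMul_mul, inv_mul_cancel, ofMul_one]

theorem ofTMul_injective (i : I) (g : G) : Function.Injective (ofTMul ρ i g) :=
  fun _ _ h => ofMul_injective ρ _ (cons_inj.mp h).2

theorem length_ofMul (g : G) (x : NormalForm H) : (ofMul ρ g x).1.length = x.1.length := by
  obtain ⟨L, k⟩ := x
  induction L generalizing g with
  | nil => simp [ofMul_nil]
  | cons e L ih =>
    obtain ⟨i, q⟩ := e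
    change (ofMul ρ g (cons i q (L, k))).1.length = L.length + 1
    rw [ofMul_cons, ofTMul, cons, List.length_cons, ih]

/-- By induction the element `ρᵢ(h)` that `g` hands on past the first `tᵢ` is `1`; injectivity
of `ρᵢ` gives `h = 1`, so `g` fixes the first coset representative. -/
theorem eq_one_of_ofMul_eq_self (hρ : ∀ i, Function.Injective (ρ i)) {g : G} {x : NormalForm H}
    (h : ofMul ρ g x = x) : g = 1 := by
  obtain ⟨L, k⟩ := x
  induction L generalizing g with
  | nil => simpa [ofMul_nil] using h
  | cons e L ih =>
    obtain ⟨i, q⟩ := e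
    change ofMul ρ g (cons i q (L, k)) = cons i q (L, k) at h
    rw [ofMul_cons, ofTMul, cons_inj] at h
    have hq : outFactor (H i) (g * q.out) = 1 := hρ i (by rw [ih h.2, map_one])
    have := out_mul_outFactor (K := H i) (g * q.out)
    rwa [hq, h.1, Subgroup.coe_one, mul_one, right_eq_mul] at this

theorem ofMul_left_injective (hρ : ∀ i, Function.Injective (ρ i)) (x : NormalForm H) :
    Function.Injective fun g => ofMul ρ g x := by
  intro g g' (h : ofMul ρ g x = ofMul ρ g' x)
  have : ofMul ρ (g'⁻¹ * g) x = x := by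
    rw [ofMul_mul, h, ← ofMul_mul, inv_mul_cancel, ofMul_one]
  exact (inv_mul_eq_one.mp (eq_one_of_ofMul_eq_self ρ hρ this)).symm

end NormalForm

open NormalForm

variable {ρ : ∀ i, H i →* G}

variable (H ρ) in
def of : G →* HNNMonoid G H ρ where
  toFun g := (FreeMonoid.of (Sum.inl g) : FreeMonoid (G ⊕ I))
  map_one' := (Con.eq _).mpr (ConGen.Rel.of _ _ HNNRel.one)
  map_mul' g h := ((Con.eq _).mpr (ConGen.Rel.of _ _ (HNNRel.mul g h))).symm

variable (H ρ) in
def t (i : I) : HNNMonoid G H ρ := (FreeMonoid.of (Sum.inr i) : FreeMonoid (G ⊕ I))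

theorem of_mul_t (i : I) (h : H i) : of H ρ h * t H ρ i = t H ρ i * of H ρ (ρ i h) :=
  (Con.eq _).mpr (ConGen.Rel.of _ _ (HNNRel.hnn i h))

@[elab_as_elim]
theorem induction_on {P : HNNMonoid G H ρ → Prop} (a : HNNMonoid G H ρ) (one : P 1)
    (of_mul : ∀ g a, P a → P (of H ρ g * a)) (t_mul : ∀ i a, P a → P (t H ρ i * a)) : P a := by
  induction a using Con.induction_on with | _ w
  induction w using FreeMonoid.inductionOn' with
  | one => exact one
  | of_mul x w ih =>
    cases x with
    | inl g => exact of_mul g _ ih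
    | inr i => exact t_mul i _ ih

variable (ρ) in
noncomputable def toEnd : HNNMonoid G H ρ →* Function.End (NormalForm H) :=
  (conGen (HNNRel G H ρ)).lift (FreeMonoid.lift (Sum.elim (ofMul ρ) fun i => ofTMul ρ i 1)) <|
    Con.conGen_le.mpr fun x y hxy => by
      rw [Con.ker_rel]
      cases hxy with
      | mul g h => exact funext fun z => (ofMul_mul ρ g h z).symm
      | one => exact funext (ofMul_one ρ)
      | hnn i h => exact funext (ofMul_ofTMul_one ρ i h)

theorem toEnd_of (g : G) : toEnd ρ (of H ρ g) = ofMul ρ g := rfl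

theorem toEnd_t (i : I) : toEnd ρ (t H ρ i) = ofTMul ρ i 1 := rfl

theorem of_mul_t_eq (i : I) (g : G) :
    of H ρ g * t H ρ i = of H ρ (g : G ⧸ H i).out * t H ρ i * of H ρ (ρ i (outFactor (H i) g)) := by
  rw [mul_assoc, ← of_mul_t, ← mul_assoc, ← map_mul, out_mul_outFactor]

variable (ρ) in
noncomputable def evalList (L : List (Σ i, G ⧸ H i)) : HNNMonoid G H ρ :=
  (L.map fun e => of H ρ e.2.out * t H ρ e.1).prod

variable (ρ) in
noncomputable def eval (x : NormalForm H) : HNNMonoid G H ρ := evalList ρ x.1 * of H ρ x.2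

theorem evalList_append (L L' : List (Σ i, G ⧸ H i)) :
    evalList ρ (L ++ L') = evalList ρ L * evalList ρ L' := by
  simp [evalList]

theorem eval_cons (i : I) (q : G ⧸ H i) (x : NormalForm H) :
    eval ρ (cons i q x) = of H ρ q.out * t H ρ i * eval ρ x := by
  simp [eval, evalList, cons, mul_assoc]

theorem eval_ofMul (g : G) (x : NormalForm H) : eval ρ (ofMul ρ g x) = of H ρ g * eval ρ x := by
  obtain ⟨L, k⟩ := x
  induction L generalizing g with
  | nil => simp [eval, evalList, ofMul_nil]
  | cons e L ih =>
    obtain ⟨i, q⟩ := e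
    change eval ρ (ofMul ρ g (cons i q (L, k))) = of H ρ g * eval ρ (cons i q (L, k))
    rw [ofMul_cons, ofTMul, eval_cons, ih, eval_cons, ← mul_assoc, ← of_mul_t_eq, map_mul]
    simp only [mul_assoc]

theorem eval_ofTMul (i : I) (g : G) (x : NormalForm H) :
    eval ρ (ofTMul ρ i g x) = of H ρ g * t H ρ i * eval ρ x := by
  rw [ofTMul, eval_cons, eval_ofMul, ← mul_assoc, ← of_mul_t_eq]

theorem eval_toEnd (a : HNNMonoid G H ρ) (x : NormalForm H) :
    eval ρ (toEnd ρ a x) = a * eval ρ x := by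
  induction a using induction_on generalizing x with
  | one => exact (one_mul _).symm
  | of_mul g a ih =>
    rw [map_mul, mul_assoc, ← ih, toEnd_of]
    exact eval_ofMul g _
  | t_mul i a ih =>
    rw [map_mul, mul_assoc, ← ih, toEnd_t]
    exact (eval_ofTMul i 1 _).trans (by rw [map_one, one_mul])

variable (ρ) in
noncomputable def normalForm (a : HNNMonoid G H ρ) : NormalForm H := toEnd ρ a ([], 1)

theorem eval_normalForm (a : HNNMonoid G H ρ) : eval ρ (normalForm ρ a) = a := by
  rw [normalForm, eval_toEnd, eval, evalList, List.map_nil, List.prod_nil, map_one, mul_one,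
    mul_one]

theorem normalForm_injective : Function.Injective (normalForm (H := H) ρ) :=
  Function.LeftInverse.injective eval_normalForm

theorem normalForm_mul (a b : HNNMonoid G H ρ) :
    normalForm ρ (a * b) = toEnd ρ a (normalForm ρ b) := by
  rw [normalForm, map_mul]; rfl

theorem toEnd_evalList (L : List (Σ i, G ⧸ H i)) (x : NormalForm H) :
    toEnd ρ (evalList ρ L) x = (L ++ x.1, x.2) := by
  induction L with
  | nil => rfl
  | cons e L ih =>
    simp only [evalList, List.map_cons, List.prod_cons] at ih ⊢
    rw [map_mul, map_mul, toEnd_of, toEnd_t]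
    change ofMul ρ _ (ofTMul ρ e.1 1 (toEnd ρ _ x)) = _
    rw [ih, ofMul_ofTMul, mul_one, ofTMul_out]
    rfl

theorem toEnd_apply (a : HNNMonoid G H ρ) (x : NormalForm H) :
    toEnd ρ a x = ((normalForm ρ a).1 ++ (ofMul ρ (normalForm ρ a).2 x).1,
      (ofMul ρ (normalForm ρ a).2 x).2) := by
  conv_lhs => rw [← eval_normalForm a, eval, map_mul]
  exact toEnd_evalList _ _

theorem toEnd_injective (a : HNNMonoid G H ρ) : Function.Injective (toEnd ρ a) := by
  induction a using induction_on with
  | one => exact Function.injective_id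
  | of_mul g a ih => rw [map_mul, toEnd_of]; exact (ofMul_injective ρ g).comp ih
  | t_mul i a ih => rw [map_mul, toEnd_t]; exact (ofTMul_injective ρ i 1).comp ih

theorem toEnd_left_injective (hρ : ∀ i, Function.Injective (ρ i)) (x : NormalForm H) :
    Function.Injective fun a : HNNMonoid G H ρ => toEnd ρ a x := by
  intro a b hab
  simp only [toEnd_apply, Prod.mk.injEq] at hab
  obtain ⟨hL, hk⟩ := List.append_inj' hab.1 (by rw [length_ofMul, length_ofMul])
  have hg := ofMul_left_injective ρ hρ x (Prod.ext hk hab.2)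
  exact normalForm_injective (Prod.ext hL hg)

instance : IsLeftCancelMul (HNNMonoid G H ρ) where
  mul_left_cancel a b c hbc :=
    normalForm_injective <| toEnd_injective a <| by
      rw [← normalForm_mul, ← normalForm_mul]; exact congrArg _ hbc

theorem of_injective : Function.Injective (of H ρ) := by
  intro g g' h
  simpa [normalForm, toEnd_of, ofMul_nil] using congrArg (normalForm ρ) h

theorem isRightCancelMul_iff_injective :
    IsRightCancelMul (HNNMonoid G H ρ) ↔ ∀ i, Function.Injective (ρ i) := by
  refine ⟨fun _ i h h' hh => ?_, fun hρ => ⟨fun a b c hbc => ?_⟩⟩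
  · apply Subtype.ext (of_injective (mul_right_cancel (b := t H ρ i) ?_))
    rw [of_mul_t, of_mul_t, hh]
  · apply toEnd_left_injective hρ (normalForm ρ a)
    simp only [← normalForm_mul]
    exact congrArg (normalForm ρ) hbc

theorem mem_prIdeal_iff (a x : HNNMonoid G H ρ) :
    x ∈ prIdeal a ↔ (normalForm ρ a).1 <+: (normalForm ρ x).1 := by
  constructor
  · rintro ⟨m, rfl⟩
    rw [normalForm_mul, toEnd_apply]
    exact List.prefix_append _ _
  · rintro ⟨K, hK⟩
    refine ⟨of H ρ (normalForm ρ a).2⁻¹ * eval ρ (K, (normalForm ρ x).2), ?_⟩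
    dsimp only
    nth_rw 1 [← eval_normalForm a]
    conv_rhs => rw [← eval_normalForm x]
    simp only [eval, ← hK, evalList_append, mul_assoc]
    rw [← mul_assoc (of H ρ _), ← map_mul, mul_inv_cancel, map_one, one_mul]

theorem prIdeal_eq_evalList (a : HNNMonoid G H ρ) :
    prIdeal a = prIdeal (evalList ρ (normalForm ρ a).1) := by
  conv_lhs => rw [← eval_normalForm a, eval]
  exact prIdeal_mul_of_isUnit _ ((Group.isUnit _).map (of H ρ))

theorem isLeftReesMonoid : IsLeftReesMonoid (HNNMonoid G H ρ) := by
  refine ⟨fun _ _ _ => mul_left_cancel, fun a b ⟨c, hca, hcb⟩ => ?_, fun a => ?_⟩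
  · rw [mem_prIdeal_iff] at hca hcb
    rcases List.prefix_or_prefix_of_prefix hca hcb with hab | hba
    · refine Or.inr fun x hx => ?_
      rw [mem_prIdeal_iff] at hx ⊢
      exact hab.trans hx
    · refine Or.inl fun x hx => ?_
      rw [mem_prIdeal_iff] at hx ⊢
      exact hba.trans hx
  · refine ((List.finite_toSet (normalForm ρ a).1.inits).image
      fun L => prIdeal (evalList ρ L)).subset ?_
    rintro S ⟨⟨b, rfl⟩, hab⟩
    refine ⟨(normalForm ρ b).1, (List.mem_inits _ _).mpr ?_, (prIdeal_eq_evalList b).symm⟩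
    exact (mem_prIdeal_iff b a).mp (hab ⟨1, mul_one a⟩)

end HNNMonoid

/-- a monoid HNN-extension of a group is cancellative (and hence a Rees
monoid, being also a left Rees monoid) if and only if every `ρᵢ` is injective. -/
theorem stmt9 (G : Type u) [Group G] {I : Type v} (H : I → Subgroup G)
    (ρ : ∀ i, H i →* G) :
    (((∀ a b c : HNNMonoid G H ρ, a * b = a * c → b = c) ∧
      (∀ a b c : HNNMonoid G H ρ, b * a = c * a → b = c)) ↔
        ∀ i, Function.Injective (ρ i)) ∧
    (((∀ a b c : HNNMonoid G H ρ, a * b = a * c → b = c) ∧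
      (∀ a b c : HNNMonoid G H ρ, b * a = c * a → b = c)) →
        IsLeftReesMonoid (HNNMonoid G H ρ)) := by
  refine ⟨⟨fun h => ?_, fun hρ => ⟨fun _ _ _ => mul_left_cancel, fun _ _ _ => ?_⟩⟩,
    fun _ => HNNMonoid.isLeftReesMonoid⟩
  · exact HNNMonoid.isRightCancelMul_iff_injective.mp ⟨fun a b c => h.2 a b c⟩
  · have := HNNMonoid.isRightCancelMul_iff_injective.mpr hρ
    exact mul_right_cancel
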